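/- Let K be a commutative ring and v, w : ℕ → K. With A^{v,w}(n,k) defined by the recurrence A^{v,w}(n,k) = A^{v,w}(n-1,k-1) + (v_{n-1}+w_k)·A^{v,w}(n-1,k) and standard initial conditions, the orthogonality relation ∑_{k=m}^{n} A^{v,w}(n,k) · A^{-w,-v}(k,m) = δ_{n,m} holds for all m ≤ n, where A^{-w,-v} is defined by the same recurrence with weight functions (-w, -v). -/

import Mathlib

open Finset

/-- The generalized two-weight array `A^{v,w}(n,k)`. -/
def A {K : Type*} [CommRing K] (v w : ℕ → K) : ℕ → ℕ → K
  | 0, 0 => 1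
  | 0, _ + 1 => 0
  | n + 1, 0 => (v n + w 0) * A v w n 0
  | n + 1, k + 1 => A v w n k + (v n + w (k + 1)) * A v w n (k + 1)

/-! Writing `B = A^{-w,-v}` and `S(n, m) = ∑_{k ≤ n} A^{v,w}(n,k) B(k,m)`, the recurrence of `A^{v,w}`
in `n` and that of `B` in its first index combine into `S(n+1, m) = S(n, m-1) + (v_n - v_m) S(n, m)`
(the first term absent when `m = 0`): the weights `w_k` cancel. Induction on `n` then gives
`S(n, m) = δ_{n,m}`, and the terms with `k < m` of `S(n, m)` vanish since `B(k, m) = 0` for `k < m`. -/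

section

variable {K : Type*} [CommRing K]

lemma A_eq_zero_of_lt (v w : ℕ → K) {n k : ℕ} (h : n < k) : A v w n k = 0 := by
  induction n generalizing k with
  | zero => cases k with
    | zero => omega
    | succ k => rfl
  | succ n ih => cases k with
    | zero => omega
    | succ k => simp only [A, ih (by omega : n < k), ih (by omega : n < k + 1), mul_zero, add_zero]

lemma sum_range_A_succ_mul (v w : ℕ → K) (n : ℕ) (f : ℕ → K) :
    ∑ k ∈ range (n + 2), A v w (n + 1) k * f k =
      ∑ k ∈ range (n + 1), A v w n k * (f (k + 1) + (v n + w k) * f k) := by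
  have hlast : ∑ k ∈ range (n + 2), (v n + w k) * (A v w n k * f k) =
      ∑ k ∈ range (n + 1), (v n + w k) * (A v w n k * f k) := by
    rw [sum_range_succ, A_eq_zero_of_lt v w n.lt_succ_self, zero_mul, mul_zero, add_zero]
  simp only [mul_add, sum_add_distrib, mul_left_comm (A v w n _)]
  rw [← hlast, sum_range_succ' _ (n + 1), sum_range_succ' _ (n + 1)]
  simp only [A, add_mul, sum_add_distrib, mul_assoc]
  ring

theorem sum_range_A_mul_A_neg (v w : ℕ → K) (n m : ℕ) :
    ∑ k ∈ range (n + 1), A v w n k * A (fun i => -w i) (fun i => -v i) k m =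
      if n = m then 1 else 0 := by
  induction n generalizing m with
  | zero => cases m <;> simp [A]
  | succ n ih =>
    rw [sum_range_A_succ_mul]
    cases m with
    | zero =>
      have hcol (k : ℕ) : A (fun i => -w i) (fun i => -v i) (k + 1) 0 +
          (v n + w k) * A (fun i => -w i) (fun i => -v i) k 0 =
            (v n - v 0) * A (fun i => -w i) (fun i => -v i) k 0 := by
        simp only [A]; ring
      simp only [hcol, mul_left_comm _ (v n - v 0), ← mul_sum, ih]
      rcases eq_or_ne n 0 with rfl | hn <;> simp [*]
    | succ m =>
      have hcol (k : ℕ) : A (fun i => -w i) (fun i => -v i) (k + 1) (m + 1) +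
          (v n + w k) * A (fun i => -w i) (fun i => -v i) k (m + 1) =
            A (fun i => -w i) (fun i => -v i) k m +
              (v n - v (m + 1)) * A (fun i => -w i) (fun i => -v i) k (m + 1) := by
        simp only [A]; ring
      simp only [hcol, mul_add, mul_left_comm _ (v n - v (m + 1)), sum_add_distrib, ← mul_sum, ih]
      split_ifs <;> simp_all

end

theorem stmt_3_general {K : Type*} [CommRing K] (v w : ℕ → K) (n m : ℕ) :
    ∑ k ∈ Finset.Icc m n, A v w n k * A (fun i => -w i) (fun i => -v i) k m =
      if n = m then 1 else 0 := by
  rw [← sum_range_A_mul_A_neg v w n m]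
  refine sum_subset (fun k hk => mem_range.2 (Nat.lt_succ_of_le (mem_Icc.1 hk).2))
    fun k hk hk' => ?_
  simp only [mem_range, mem_Icc, not_and, not_le] at hk hk'
  rw [A_eq_zero_of_lt (fun i => -w i) (fun i => -v i) (by omega : k < m), mul_zero]

theorem stmt_3 {K : Type*} [CommRing K] (v w : ℕ → K) (n m : ℕ) (hmn : m ≤ n) :
    ∑ k ∈ Finset.Icc m n, A v w n k * A (fun i => -w i) (fun i => -v i) k m =
      if n = m then 1 else 0 :=
  stmt_3_general v w n m
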